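/- Let 1/2 < s̄ ≤ 1 and 0 < ε < s̄ − 1/2. Then there exists a neighborhood U of (s̄, 1−s̄², 0, 0, 0) in ℝ⁵ such that every vacuum or inflationary solution Γ of the Bianchi class B system with (Σ₊, Σ̃, Δ, Ã, N₊)(τ₀) ∈ U for some τ₀ ∈ ℝ converges, as τ → −∞, to a point (s, 1−s², 0, 0, 0) of the Kasner parabola with |s − s̄| < ε. -/

import Mathlib

open Real Filter Topology MeasureTheory

noncomputable def NT (κ : ℝ) (Ap Np : ℝ → ℝ) (τ : ℝ) : ℝ :=
  (1/3) * ((Np τ)^2 - κ * Ap τ)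

noncomputable def qF (γ κ : ℝ) (Sp St Ap Np : ℝ → ℝ) (τ : ℝ) : ℝ :=
  (3/2)*(2-γ)*((Sp τ)^2 + St τ) + (1/2)*(3*γ-2)*(1 - Ap τ - NT κ Ap Np τ)

noncomputable def OmF (κ : ℝ) (Sp St Ap Np : ℝ → ℝ) (τ : ℝ) : ℝ :=
  1 - (Sp τ)^2 - St τ - Ap τ - NT κ Ap Np τ

/-- A solution of the Bianchi class B system in expansion-normalised variables. -/
structure BianchiB (γ κ : ℝ) (Sp St Dl Ap Np : ℝ → ℝ) : Prop where
  hγ : γ ∈ Set.Icc (0:ℝ) 2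
  diff_Sp : Differentiable ℝ Sp
  diff_St : Differentiable ℝ St
  diff_Dl : Differentiable ℝ Dl
  diff_Ap : Differentiable ℝ Ap
  diff_Np : Differentiable ℝ Np
  ev_Sp : ∀ τ, deriv Sp τ = (qF γ κ Sp St Ap Np τ - 2) * Sp τ - 2 * NT κ Ap Np τ
  ev_St : ∀ τ, deriv St τ =
    2*(qF γ κ Sp St Ap Np τ - 2) * St τ - 4 * Sp τ * Ap τ - 4 * Dl τ * Np τ
  ev_Dl : ∀ τ, deriv Dl τ =
    2*(qF γ κ Sp St Ap Np τ + Sp τ - 1) * Dl τ + 2*(St τ - NT κ Ap Np τ) * Np τ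
  ev_Ap : ∀ τ, deriv Ap τ = 2*(qF γ κ Sp St Ap Np τ + 2*Sp τ) * Ap τ
  ev_Np : ∀ τ, deriv Np τ = (qF γ κ Sp St Ap Np τ + 2*Sp τ) * Np τ + 6 * Dl τ
  con_main : ∀ τ, St τ * NT κ Ap Np τ - (Dl τ)^2 - (Sp τ)^2 * Ap τ = 0
  con_St : ∀ τ, 0 ≤ St τ
  con_Ap : ∀ τ, 0 ≤ Ap τ
  con_NT : ∀ τ, 0 ≤ NT κ Ap Np τ
  con_sum : ∀ τ, (Sp τ)^2 + St τ + Ap τ + NT κ Ap Np τ ≤ 1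

def Vacuum (κ : ℝ) (Sp St Ap Np : ℝ → ℝ) : Prop :=
  ∀ τ, OmF κ Sp St Ap Np τ = 0

def Inflationary (γ κ : ℝ) (Sp St Ap Np : ℝ → ℝ) : Prop :=
  (∀ τ, 0 < OmF κ Sp St Ap Np τ) ∧ γ ∈ Set.Ico (0:ℝ) (2/3)

def traj (Sp St Dl Ap Np : ℝ → ℝ) (τ : ℝ) : ℝ × ℝ × ℝ × ℝ × ℝ :=
  (Sp τ, St τ, Dl τ, Ap τ, Np τ)

def AlphaLimitPt (Sp St Dl Ap Np : ℝ → ℝ) (p : ℝ × ℝ × ℝ × ℝ × ℝ) : Prop :=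
  ∃ t : ℕ → ℝ, Tendsto t atTop atBot ∧
    Tendsto (fun n => traj Sp St Dl Ap Np (t n)) atTop (𝓝 p)

def Kasner : Set (ℝ × ℝ × ℝ × ℝ × ℝ) :=
  {p | ∃ s, s ∈ Set.Icc (-1:ℝ) 1 ∧ p = (s, 1 - s^2, 0, 0, 0)}

def PlaneWave (κ : ℝ) : Set (ℝ × ℝ × ℝ × ℝ × ℝ) :=
  {p | ∃ s n : ℝ, -1 < s ∧ n^2 = (1+s)*(κ*(1+s) - 3*s) ∧ p = (s, -s*(1+s), 0, (1+s)^2, n)}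

def IsConstSol (Sp St Dl Ap Np : ℝ → ℝ) : Prop :=
  ∀ τ, traj Sp St Dl Ap Np τ = traj Sp St Dl Ap Np 0

/-- `BigO f a` : `f = O(e^{a τ})` as `τ → −∞`. -/
def BigO (f : ℝ → ℝ) (a : ℝ) : Prop :=
  ∃ C > 0, ∃ τ₀ : ℝ, ∀ τ ≤ τ₀, |f τ| ≤ C * Real.exp (a * τ)

open scoped Classical in
noncomputable def PiVal (γ s : ℝ) (vac : Prop) : ℝ :=
  if vac then 4 + 4*s else min (6 - 3*γ) (4 + 4*s)

open scoped Classical in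
noncomputable def PiBarVal (γ s : ℝ) (vac : Prop) : ℝ :=
  if vac then 4 + 4*s - 4*Real.sqrt (3*(1-s^2))
  else min (6 - 3*γ) (4 + 4*s - 4*Real.sqrt (3*(1-s^2)))

/-!
The function `g = 1 - Σ₊² - Σ̃ + |κ| Ã` equals `(1 + |κ|) Ã + Ñ + Ω` on solutions, so it is
nonnegative and controls the distance to the Kasner parabola. Where `λ + 6 g ≤ 8 Σ₊ - 4` one has
`g' ≥ λ g`: the cross term `4 Δ N₊` is absorbed using `Δ² ≤ Σ̃ Ñ`, and this is where `s̄ > 1/2`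
enters. Hence `g` decays like `e^{λ τ}` as `τ → -∞`, and since `|Σ₊'| ≤ 4 g ≤ (4/λ) g'`, the
total variation of `Σ₊` on `(-∞, τ₀]` is at most `(4/λ) g(τ₀)`. A continuity argument shows that
a solution starting close enough to `(s̄, 1 - s̄², 0, 0, 0)` never leaves the region where these
estimates hold; so `g → 0` and `Σ₊` converges, which forces convergence to a Kasner point.
-/

open Set

theorem IsClosed.Icc_subset_of_forall_mem_nhdsLT_of_Icc_subset {α : Type*}
    [ConditionallyCompleteLinearOrder α] [TopologicalSpace α] [OrderTopology α]
    [DenselyOrdered α] {a b : α} {s : Set α}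
    (hs : IsClosed (s ∩ Icc a b)) (hb : b ∈ s)
    (h : ∀ t ∈ Ioc a b, Icc t b ⊆ s → s ∈ 𝓝[<] t) :
    Icc a b ⊆ s := by
  have hs' : IsClosed (OrderDual.ofDual ⁻¹' (s ∩ Icc a b)) := hs
  rw [preimage_inter, ← Icc_toDual] at hs'
  have := hs'.Icc_subset_of_forall_mem_nhdsGT_of_Icc_subset hb
    (fun t ht hts => h (OrderDual.ofDual t) ⟨ht.2, ht.1⟩ (fun x hx => hts ⟨hx.2, hx.1⟩))
  exact fun x hx => this ⟨hx.2, hx.1⟩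

theorem le_mul_exp_of_mul_le_deriv {f : ℝ → ℝ} {a b c : ℝ} (hf : Differentiable ℝ f)
    (hab : a ≤ b) (h : ∀ x ∈ Ioo a b, c * f x ≤ deriv f x) :
    f a ≤ f b * exp (c * (a - b)) := by
  have hF : ∀ x, HasDerivAt (fun x => f x * exp (-(c * x)))
      (deriv f x * exp (-(c * x)) + f x * (exp (-(c * x)) * -c)) x := fun x =>
    (hf x).hasDerivAt.mul ((((hasDerivAt_id x).const_mul c).neg).exp.congr_deriv (by simp))
  have hmono : MonotoneOn (fun x => f x * exp (-(c * x))) (Icc a b) := by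
    refine monotoneOn_of_deriv_nonneg (convex_Icc a b)
      (fun x _ => (hF x).continuousAt.continuousWithinAt)
      (fun x _ => (hF x).differentiableAt.differentiableWithinAt) fun x hx => ?_
    rw [interior_Icc] at hx
    rw [(hF x).deriv]
    nlinarith [h x hx, exp_pos (-(c * x))]
  have := hmono (left_mem_Icc.2 hab) (right_mem_Icc.2 hab) hab
  calc f a = f a * exp (-(c * a)) * exp (c * a) := by rw [mul_assoc, ← exp_add]; simp
    _ ≤ f b * exp (-(c * b)) * exp (c * a) := by gcongr
    _ = f b * exp (c * (a - b)) := by rw [mul_assoc, ← exp_add]; ring_nf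

theorem abs_sub_le_sub_of_abs_deriv_le_deriv {f g : ℝ → ℝ} {a b : ℝ} (hf : Differentiable ℝ f)
    (hg : Differentiable ℝ g) (hab : a ≤ b) (h : ∀ x ∈ Ioo a b, |deriv f x| ≤ deriv g x) :
    |f b - f a| ≤ g b - g a := by
  have hmono : ∀ ε : ℝ, |ε| = 1 → MonotoneOn (fun x => g x + ε * f x) (Icc a b) := by
    intro ε hε
    have hd : ∀ x, HasDerivAt (fun x => g x + ε * f x) (deriv g x + ε * deriv f x) x :=
      fun x => (hg x).hasDerivAt.add ((hf x).hasDerivAt.const_mul ε)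
    refine monotoneOn_of_deriv_nonneg (convex_Icc a b)
      (fun x _ => (hd x).continuousAt.continuousWithinAt)
      (fun x _ => (hd x).differentiableAt.differentiableWithinAt) fun x hx => ?_
    rw [interior_Icc] at hx
    have := neg_abs_le (ε * deriv f x)
    rw [abs_mul, hε, one_mul] at this
    rw [(hd x).deriv]
    linarith [h x hx]
  have h₁ := hmono 1 (by norm_num) (left_mem_Icc.2 hab) (right_mem_Icc.2 hab) hab
  have h₂ := hmono (-1) (by norm_num) (left_mem_Icc.2 hab) (right_mem_Icc.2 hab) hab
  simp only at h₁ h₂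
  rw [abs_sub_le_iff]; constructor <;> linarith

theorem exists_tendsto_atBot_of_abs_sub_le_sub {f G : ℝ → ℝ} {b : ℝ}
    (hG : Tendsto G atBot (𝓝 0)) (h : ∀ x y, x ≤ y → y ≤ b → |f y - f x| ≤ G y - G x) :
    ∃ L, Tendsto f atBot (𝓝 L) := by
  refine cauchy_map_iff_exists_tendsto.1 (Metric.cauchy_iff.2 ⟨inferInstance, fun e he => ?_⟩)
  obtain ⟨T, hT⟩ := eventually_atBot.1
    ((hG.eventually (Metric.ball_mem_nhds 0 (half_pos he))).and (eventually_le_atBot b))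
  refine ⟨f '' Iic T, image_mem_map (Iic_mem_atBot T), ?_⟩
  have key : ∀ x y, x ≤ y → y ≤ T → dist (f x) (f y) < e := fun x y hxy hy => by
    have hx := hT x (hxy.trans hy)
    have hy := hT y hy
    simp only [Real.dist_eq, sub_zero] at hx hy
    rw [Real.dist_eq, abs_sub_comm]
    have := h x y hxy hy.2
    linarith [le_abs_self (G y), neg_abs_le (G x)]
  rintro _ ⟨x, hx, rfl⟩ _ ⟨y, hy, rfl⟩
  rcases le_total x y with hxy | hxy
  · exact key x y hxy hy
  · exact dist_comm (f x) (f y) ▸ key y x hxy hx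

/-- The function `g` above, on the state space `(Σ₊, Σ̃, Δ, Ã, N₊)`. -/
def kasnerDefect (κ : ℝ) (p : ℝ × ℝ × ℝ × ℝ × ℝ) : ℝ :=
  1 - p.1 ^ 2 - p.2.1 + |κ| * p.2.2.2.1

theorem continuous_kasnerDefect (κ : ℝ) : Continuous (kasnerDefect κ) := by
  unfold kasnerDefect; fun_prop

theorem qF_sub_two (γ κ : ℝ) (Sp St Ap Np : ℝ → ℝ) (τ : ℝ) :
    qF γ κ Sp St Ap Np τ - 2
      = -2 * Ap τ - 2 * NT κ Ap Np τ - (3 - 3 * γ / 2) * OmF κ Sp St Ap Np τ := by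
  simp only [qF, OmF]; ring

theorem kasnerDefect_traj (κ : ℝ) (Sp St Dl Ap Np : ℝ → ℝ) (τ : ℝ) :
    kasnerDefect κ (traj Sp St Dl Ap Np τ)
      = (1 + |κ|) * Ap τ + NT κ Ap Np τ + OmF κ Sp St Ap Np τ := by
  simp only [kasnerDefect, traj, OmF]; ring

namespace BianchiB

variable {γ κ : ℝ} {Sp St Dl Ap Np : ℝ → ℝ}

theorem OmF_nonneg (h : BianchiB γ κ Sp St Dl Ap Np) (τ : ℝ) : 0 ≤ OmF κ Sp St Ap Np τ := by
  simp only [OmF]; linarith [h.con_sum τ]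

theorem Sp_mem_Icc (h : BianchiB γ κ Sp St Dl Ap Np) (τ : ℝ) : Sp τ ∈ Icc (-1) 1 := by
  rw [mem_Icc, ← abs_le, ← sq_le_one_iff_abs_le_one]
  linarith [h.con_sum τ, h.con_St τ, h.con_Ap τ, h.con_NT τ]

theorem sq_Dl_le (h : BianchiB γ κ Sp St Dl Ap Np) (τ : ℝ) :
    Dl τ ^ 2 ≤ (1 - Sp τ ^ 2) * NT κ Ap Np τ := by
  have hSt : St τ ≤ 1 - Sp τ ^ 2 := by linarith [h.con_sum τ, h.con_Ap τ, h.con_NT τ]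
  nlinarith [h.con_main τ, mul_le_mul_of_nonneg_right hSt (h.con_NT τ),
    mul_nonneg (sq_nonneg (Sp τ)) (h.con_Ap τ)]

theorem sq_Np_le (h : BianchiB γ κ Sp St Dl Ap Np) (τ : ℝ) :
    Np τ ^ 2 ≤ 3 * NT κ Ap Np τ + |κ| * Ap τ := by
  have : κ * Ap τ ≤ |κ| * Ap τ := mul_le_mul_of_nonneg_right (le_abs_self κ) (h.con_Ap τ)
  simp only [NT]; linarith

theorem kasnerDefect_nonneg (h : BianchiB γ κ Sp St Dl Ap Np) (τ : ℝ) :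
    0 ≤ kasnerDefect κ (traj Sp St Dl Ap Np τ) := by
  rw [kasnerDefect_traj]
  have := h.con_Ap τ
  linarith [h.con_NT τ, h.OmF_nonneg τ, mul_nonneg (by positivity : (0 : ℝ) ≤ 1 + |κ|) this]

theorem le_kasnerDefect (h : BianchiB γ κ Sp St Dl Ap Np) (τ : ℝ) :
    Ap τ + NT κ Ap Np τ + OmF κ Sp St Ap Np τ ≤ kasnerDefect κ (traj Sp St Dl Ap Np τ) := by
  rw [kasnerDefect_traj]
  linarith [mul_nonneg (abs_nonneg κ) (h.con_Ap τ)]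

theorem hasDerivAt_kasnerDefect (h : BianchiB γ κ Sp St Dl Ap Np) (τ : ℝ) :
    HasDerivAt (kasnerDefect κ ∘ traj Sp St Dl Ap Np)
      (2 * (qF γ κ Sp St Ap Np τ + 2 * Sp τ) * ((1 + |κ|) * Ap τ + NT κ Ap Np τ)
        + 4 * Dl τ * Np τ + (2 * qF γ κ Sp St Ap Np τ - 3 * γ + 2) * OmF κ Sp St Ap Np τ) τ := by
  have hd := (((hasDerivAt_const τ (1 : ℝ)).sub ((h.diff_Sp τ).hasDerivAt.pow 2)).sub
    (h.diff_St τ).hasDerivAt).add ((h.diff_Ap τ).hasDerivAt.const_mul |κ|)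
  refine (hd.congr_deriv ?_ : HasDerivAt (kasnerDefect κ ∘ traj Sp St Dl Ap Np) _ τ)
  rw [h.ev_Sp, h.ev_St, h.ev_Ap]
  simp only [qF, NT, OmF]
  ring

theorem abs_deriv_Sp_le (h : BianchiB γ κ Sp St Dl Ap Np) (τ : ℝ) :
    |deriv Sp τ| ≤ 4 * kasnerDefect κ (traj Sp St Dl Ap Np τ) := by
  have hq := qF_sub_two γ κ Sp St Ap Np τ
  have hA := h.con_Ap τ
  have hN := h.con_NT τ
  have hΩ := h.OmF_nonneg τ
  have hP : 0 ≤ 2 - qF γ κ Sp St Ap Np τ := by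
    nlinarith [mul_nonneg (by linarith [h.hγ.2] : (0 : ℝ) ≤ 3 - 3 * γ / 2) hΩ]
  have hP' : 2 - qF γ κ Sp St Ap Np τ ≤ 2 * Ap τ + 2 * NT κ Ap Np τ + 3 * OmF κ Sp St Ap Np τ := by
    nlinarith [mul_nonneg h.hγ.1 hΩ]
  have hS := h.Sp_mem_Icc τ
  rw [h.ev_Sp, abs_le]
  constructor <;> nlinarith [h.le_kasnerDefect τ, mul_nonneg hP (sub_nonneg.2 hS.2),
    mul_nonneg hP (neg_le_iff_add_nonneg.1 hS.1)]

theorem neg_four_mul_Dl_mul_Np_le (h : BianchiB γ κ Sp St Dl Ap Np) (τ : ℝ)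
    (hSp : 0 < 1 + Sp τ) :
    -(4 * Dl τ * Np τ) ≤ (8 - 4 * Sp τ) * NT κ Ap Np τ + 4 / 3 * |κ| * Ap τ := by
  have hDl := h.sq_Dl_le τ
  have hNp := h.sq_Np_le τ
  have hS1 := (h.Sp_mem_Icc τ).2
  refine le_of_mul_le_mul_left ?_ hSp
  have hκA := mul_nonneg (abs_nonneg κ) (h.con_Ap τ)
  nlinarith [sq_nonneg (3 * Dl τ + (1 + Sp τ) * Np τ),
    mul_le_mul_of_nonneg_left hNp (sq_nonneg (1 + Sp τ)),
    mul_nonneg (mul_nonneg hSp.le (sub_nonneg.2 hS1)) hκA]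

theorem mul_kasnerDefect_le_deriv (h : BianchiB γ κ Sp St Dl Ap Np)
    (hvi : Vacuum κ Sp St Ap Np ∨ Inflationary γ κ Sp St Ap Np) {lam x : ℝ} (hlam : 0 ≤ lam)
    (hx : lam + 6 * kasnerDefect κ (traj Sp St Dl Ap Np x) ≤ 8 * Sp x - 4) :
    lam * kasnerDefect κ (traj Sp St Dl Ap Np x)
      ≤ deriv (kasnerDefect κ ∘ traj Sp St Dl Ap Np) x := by
  rw [(h.hasDerivAt_kasnerDefect x).deriv]
  have hW := h.le_kasnerDefect x
  rw [kasnerDefect_traj] at hx hW ⊢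
  set q := qF γ κ Sp St Ap Np x
  set A := Ap x
  set N := NT κ Ap Np x
  set Ω := OmF κ Sp St Ap Np x
  have hA := h.con_Ap x
  have hN := h.con_NT x
  have hΩ := h.OmF_nonneg x
  have hS1 := (h.Sp_mem_Icc x).2
  have hq : 2 - 3 * (A + N + Ω) ≤ q := by
    have := qF_sub_two γ κ Sp St Ap Np x
    nlinarith [mul_nonneg h.hγ.1 hΩ]
  have hcross := h.neg_four_mul_Dl_mul_Np_le x (by linarith)
  have hcoefA : 4 * (1 + |κ|) ≤ (2 * (q + 2 * Sp x) - lam) * (1 + |κ|) :=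
    mul_le_mul_of_nonneg_right (by linarith) (by positivity)
  have htermN : 0 ≤ (2 * q + 8 * Sp x - 8 - lam) * N := mul_nonneg (by linarith) hN
  have htermA : 0 ≤ ((2 * (q + 2 * Sp x) - lam) * (1 + |κ|) - 4 / 3 * |κ|) * A :=
    mul_nonneg (by linarith [abs_nonneg κ]) hA
  have htermΩ : 0 ≤ (2 * q - 3 * γ + 2 - lam) * Ω := by
    rcases hvi with hvac | hinf
    · simp [Ω, hvac x]
    · exact mul_nonneg (by linarith [hinf.2.2]) hΩ
  linarith

theorem kasnerDefect_le_mul_exp (h : BianchiB γ κ Sp St Dl Ap Np)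
    (hvi : Vacuum κ Sp St Ap Np ∨ Inflationary γ κ Sp St Ap Np) {lam a b : ℝ} (hlam : 0 ≤ lam)
    (hab : a ≤ b)
    (hreg : ∀ x ∈ Ioo a b, lam + 6 * kasnerDefect κ (traj Sp St Dl Ap Np x) ≤ 8 * Sp x - 4) :
    kasnerDefect κ (traj Sp St Dl Ap Np a)
      ≤ kasnerDefect κ (traj Sp St Dl Ap Np b) * exp (lam * (a - b)) :=
  le_mul_exp_of_mul_le_deriv (fun x => (h.hasDerivAt_kasnerDefect x).differentiableAt) hab
    fun x hx => h.mul_kasnerDefect_le_deriv hvi hlam (hreg x hx)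

theorem abs_Sp_sub_le (h : BianchiB γ κ Sp St Dl Ap Np)
    (hvi : Vacuum κ Sp St Ap Np ∨ Inflationary γ κ Sp St Ap Np) {lam a b : ℝ} (hlam : 0 < lam)
    (hab : a ≤ b)
    (hreg : ∀ x ∈ Ioo a b, lam + 6 * kasnerDefect κ (traj Sp St Dl Ap Np x) ≤ 8 * Sp x - 4) :
    |Sp b - Sp a| ≤ 4 / lam * kasnerDefect κ (traj Sp St Dl Ap Np b)
      - 4 / lam * kasnerDefect κ (traj Sp St Dl Ap Np a) := by
  have hg : Differentiable ℝ (kasnerDefect κ ∘ traj Sp St Dl Ap Np) :=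
    fun x => (h.hasDerivAt_kasnerDefect x).differentiableAt
  refine abs_sub_le_sub_of_abs_deriv_le_deriv
    (g := fun x => 4 / lam * (kasnerDefect κ ∘ traj Sp St Dl Ap Np) x)
    h.diff_Sp (hg.const_mul _) hab fun x hx => ?_
  rw [deriv_const_mul _ (hg x)]
  calc |deriv Sp x| ≤ 4 * kasnerDefect κ (traj Sp St Dl Ap Np x) := h.abs_deriv_Sp_le x
    _ = 4 / lam * (lam * kasnerDefect κ (traj Sp St Dl Ap Np x)) := by field_simp
    _ ≤ _ := by gcongr; exact h.mul_kasnerDefect_le_deriv hvi hlam.le (hreg x hx)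

theorem tendsto_traj_of_tendsto (h : BianchiB γ κ Sp St Dl Ap Np) {l : Filter ℝ} {s : ℝ}
    (hg : Tendsto (kasnerDefect κ ∘ traj Sp St Dl Ap Np) l (𝓝 0)) (hS : Tendsto Sp l (𝓝 s)) :
    Tendsto (traj Sp St Dl Ap Np) l (𝓝 ((s, 1 - s ^ 2, 0, 0, 0) : ℝ × ℝ × ℝ × ℝ × ℝ)) := by
  have hle := h.le_kasnerDefect
  simp only [Function.comp_def] at hg
  have hA : Tendsto Ap l (𝓝 0) := squeeze_zero (fun τ => h.con_Ap τ)
    (fun τ => by linarith [hle τ, h.con_NT τ, h.OmF_nonneg τ]) hg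
  have hN : Tendsto (NT κ Ap Np) l (𝓝 0) := squeeze_zero (fun τ => h.con_NT τ)
    (fun τ => by linarith [hle τ, h.con_Ap τ, h.OmF_nonneg τ]) hg
  have hΩ : Tendsto (OmF κ Sp St Ap Np) l (𝓝 0) := squeeze_zero (fun τ => h.OmF_nonneg τ)
    (fun τ => by linarith [hle τ, h.con_Ap τ, h.con_NT τ]) hg
  have hSt : Tendsto St l (𝓝 (1 - s ^ 2)) := by
    have := (((tendsto_const_nhds (x := (1 : ℝ))).sub (hS.pow 2)).sub hA).sub hN |>.sub hΩ
    simp only [sub_zero] at this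
    refine this.congr fun τ => ?_
    simp only [OmF]; ring
  have hsqrt : Tendsto (fun τ => √(3 * NT κ Ap Np τ + |κ| * Ap τ)) l (𝓝 0) := by
    simpa using ((hN.const_mul 3).add (hA.const_mul |κ|)).sqrt
  have hDl : Tendsto Dl l (𝓝 0) := by
    refine squeeze_zero_norm (fun τ => Real.abs_le_sqrt ?_) (by simpa using hN.sqrt)
    nlinarith [h.sq_Dl_le τ, h.con_NT τ, sq_nonneg (Sp τ)]
  have hNp : Tendsto Np l (𝓝 0) :=
    squeeze_zero_norm (fun τ => Real.abs_le_sqrt (h.sq_Np_le τ)) hsqrt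
  exact hS.prodMk_nhds (hSt.prodMk_nhds (hDl.prodMk_nhds (hA.prodMk_nhds hNp)))

theorem exists_tendsto_kasner (h : BianchiB γ κ Sp St Dl Ap Np)
    (hvi : Vacuum κ Sp St Ap Np ∨ Inflationary γ κ Sp St Ap Np) {lam τ₀ : ℝ} (hlam : 0 < lam)
    (hreg : ∀ x ≤ τ₀, lam + 6 * kasnerDefect κ (traj Sp St Dl Ap Np x) ≤ 8 * Sp x - 4) :
    ∃ s, Tendsto Sp atBot (𝓝 s) ∧
      Tendsto (traj Sp St Dl Ap Np) atBot (𝓝 ((s, 1 - s ^ 2, 0, 0, 0) : ℝ × ℝ × ℝ × ℝ × ℝ)) := by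
  have hreg' : ∀ a b, b ≤ τ₀ → ∀ x ∈ Ioo a b,
      lam + 6 * kasnerDefect κ (traj Sp St Dl Ap Np x) ≤ 8 * Sp x - 4 :=
    fun a b hb x hx => hreg x (hx.2.le.trans hb)
  have hg : Tendsto (kasnerDefect κ ∘ traj Sp St Dl Ap Np) atBot (𝓝 0) := by
    have hexp : Tendsto (fun τ => exp (lam * (τ - τ₀))) atBot (𝓝 0) :=
      tendsto_exp_atBot.comp (tendsto_atBot_add_const_right _ _ tendsto_id |>.const_mul_atBot hlam)
    refine squeeze_zero' (Eventually.of_forall h.kasnerDefect_nonneg)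
      (eventually_atBot.2 ⟨τ₀, fun τ hτ => h.kasnerDefect_le_mul_exp hvi hlam.le hτ
        (hreg' τ τ₀ le_rfl)⟩) ?_
    simpa using hexp.const_mul (kasnerDefect κ (traj Sp St Dl Ap Np τ₀))
  obtain ⟨s, hS⟩ := exists_tendsto_atBot_of_abs_sub_le_sub (f := Sp) (b := τ₀)
    (by simpa using hg.const_mul (4 / lam))
    fun a b hab hb => h.abs_Sp_sub_le hvi hlam hab (hreg' a b hb)
  exact ⟨s, hS, h.tendsto_traj_of_tendsto hg hS⟩

theorem forall_le_near_kasner (h : BianchiB γ κ Sp St Dl Ap Np)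
    (hvi : Vacuum κ Sp St Ap Np ∨ Inflationary γ κ Sp St Ap Np) {sb r d lam τ₀ : ℝ}
    (hlam : 0 < lam) (hgrowth : lam + 6 * d ≤ 8 * (sb - r) - 4) (hdr : 8 * d ≤ lam * r)
    (hS₀ : |Sp τ₀ - sb| < r / 2) (hg₀ : kasnerDefect κ (traj Sp St Dl Ap Np τ₀) < d) :
    ∀ τ ≤ τ₀, |Sp τ - sb| ≤ r ∧ kasnerDefect κ (traj Sp St Dl Ap Np τ) ≤ d := by
  have hgc : Continuous (kasnerDefect κ ∘ traj Sp St Dl Ap Np) :=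
    continuous_iff_continuousAt.2 fun x => (h.hasDerivAt_kasnerDefect x).continuousAt
  have hSc : Continuous Sp := h.diff_Sp.continuous
  have improve : ∀ t ≤ τ₀,
      Icc t τ₀ ⊆ {σ | |Sp σ - sb| ≤ r ∧ kasnerDefect κ (traj Sp St Dl Ap Np σ) ≤ d} →
      |Sp t - sb| < r ∧ kasnerDefect κ (traj Sp St Dl Ap Np t) < d := by
    intro t ht hR
    have hreg : ∀ x ∈ Ioo t τ₀, lam + 6 * kasnerDefect κ (traj Sp St Dl Ap Np x) ≤ 8 * Sp x - 4 :=
      fun x hx => by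
        obtain ⟨hSx, hgx⟩ := hR (Ioo_subset_Icc_self hx)
        linarith [(abs_le.1 hSx).1]
    have hexp : exp (lam * (t - τ₀)) ≤ 1 :=
      exp_le_one_iff.2 (mul_nonpos_of_nonneg_of_nonpos hlam.le (sub_nonpos.2 ht))
    have hS := h.abs_Sp_sub_le hvi hlam ht hreg
    have hgt : 0 ≤ 4 / lam * kasnerDefect κ (traj Sp St Dl Ap Np t) :=
      mul_nonneg (by positivity) (h.kasnerDefect_nonneg t)
    have hgτ₀ : 4 / lam * kasnerDefect κ (traj Sp St Dl Ap Np τ₀) < r / 2 := by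
      calc 4 / lam * kasnerDefect κ (traj Sp St Dl Ap Np τ₀) < 4 / lam * d := by gcongr
        _ ≤ r / 2 := by rw [div_mul_eq_mul_div, div_le_iff₀ hlam]; linarith
    constructor
    · calc |Sp t - sb| ≤ |Sp t - Sp τ₀| + |Sp τ₀ - sb| := abs_sub_le _ _ _
        _ < r := by rw [abs_sub_comm]; linarith
    · calc kasnerDefect κ (traj Sp St Dl Ap Np t)
          ≤ kasnerDefect κ (traj Sp St Dl Ap Np τ₀) * exp (lam * (t - τ₀)) :=
            h.kasnerDefect_le_mul_exp hvi hlam.le ht hreg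
        _ ≤ kasnerDefect κ (traj Sp St Dl Ap Np τ₀) :=
            mul_le_of_le_one_right (h.kasnerDefect_nonneg τ₀) hexp
        _ < d := hg₀
  intro τ hτ
  refine IsClosed.Icc_subset_of_forall_mem_nhdsLT_of_Icc_subset
    (s := {σ | |Sp σ - sb| ≤ r ∧ kasnerDefect κ (traj Sp St Dl Ap Np σ) ≤ d}) ?_ ?_ ?_
    (left_mem_Icc.2 hτ)
  · exact ((isClosed_le (hSc.sub continuous_const).abs continuous_const).inter
      (isClosed_le hgc continuous_const)).inter isClosed_Icc
  · exact ⟨by linarith [abs_nonneg (Sp τ₀ - sb)], hg₀.le⟩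
  · intro t ht hR
    have hopen : IsOpen {σ | |Sp σ - sb| < r ∧ kasnerDefect κ (traj Sp St Dl Ap Np σ) < d} :=
      (isOpen_lt (hSc.sub continuous_const).abs continuous_const).inter
        (isOpen_lt hgc continuous_const)
    exact mem_nhdsWithin_of_mem_nhds (mem_of_superset (hopen.mem_nhds (improve t ht.2 hR))
      fun σ hσ => ⟨hσ.1.le, hσ.2.le⟩)

end BianchiB

theorem stmt19_general (γ κ sb ε : ℝ)
    (hsb : 1/2 < sb ∧ sb ≤ 1) (hε : 0 < ε ∧ ε < sb - 1/2) :
    ∃ U ∈ 𝓝 ((sb, 1 - sb^2, 0, 0, 0) : ℝ × ℝ × ℝ × ℝ × ℝ),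
      ∀ Sp St Dl Ap Np : ℝ → ℝ, BianchiB γ κ Sp St Dl Ap Np →
        (Vacuum κ Sp St Ap Np ∨ Inflationary γ κ Sp St Ap Np) →
        (∃ τ₀ : ℝ, traj Sp St Dl Ap Np τ₀ ∈ U) →
        ∃ s ∈ Set.Icc (-1:ℝ) 1, |s - sb| < ε ∧
          Tendsto (traj Sp St Dl Ap Np) atBot
            (𝓝 ((s, 1 - s^2, 0, 0, 0) : ℝ × ℝ × ℝ × ℝ × ℝ)) := by
  obtain ⟨hsb, hsb1⟩ := hsb
  obtain ⟨hε, hεsb⟩ := hε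
  have hU : IsOpen {p : ℝ × ℝ × ℝ × ℝ × ℝ | |p.1 - sb| < ε / 4 ∧ kasnerDefect κ p < ε ^ 2 / 16} :=
    (isOpen_lt (continuous_fst.sub continuous_const).abs continuous_const).inter
      (isOpen_lt (continuous_kasnerDefect κ) continuous_const)
  refine ⟨_, hU.mem_nhds ⟨by simpa using hε, by simp [kasnerDefect]; positivity⟩, ?_⟩
  rintro Sp St Dl Ap Np h hvi ⟨τ₀, hS₀, hg₀⟩
  change |Sp τ₀ - sb| < ε / 4 at hS₀
  have hgrowth : ε + 6 * (ε ^ 2 / 16) ≤ 8 * (sb - ε / 2) - 4 := by nlinarith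
  have hnear := h.forall_le_near_kasner hvi hε hgrowth (by linarith) (by linarith) hg₀
  obtain ⟨s, hSs, htraj⟩ := h.exists_tendsto_kasner hvi hε fun x hx => by
    obtain ⟨hSx, hgx⟩ := hnear x hx
    linarith [(abs_le.1 hSx).1]
  have hs : |s - sb| ≤ ε / 2 := le_of_tendsto (hSs.sub_const sb).abs
    (eventually_atBot.2 ⟨τ₀, fun τ hτ => (hnear τ hτ).1⟩)
  have hsI : s ∈ Icc (-1) 1 := isClosed_Icc.mem_of_tendsto hSs (Eventually.of_forall h.Sp_mem_Icc)
  exact ⟨s, hsI, by linarith, htraj⟩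

theorem stmt19 (γ κ sb ε : ℝ)
    (hγ : γ ∈ Set.Icc (0:ℝ) 2)
    (hsb : 1/2 < sb ∧ sb ≤ 1) (hε : 0 < ε ∧ ε < sb - 1/2) :
    ∃ U ∈ 𝓝 ((sb, 1 - sb^2, 0, 0, 0) : ℝ × ℝ × ℝ × ℝ × ℝ),
      ∀ Sp St Dl Ap Np : ℝ → ℝ, BianchiB γ κ Sp St Dl Ap Np →
        (Vacuum κ Sp St Ap Np ∨ Inflationary γ κ Sp St Ap Np) →
        (∃ τ₀ : ℝ, traj Sp St Dl Ap Np τ₀ ∈ U) →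
        ∃ s ∈ Set.Icc (-1:ℝ) 1, |s - sb| < ε ∧
          Tendsto (traj Sp St Dl Ap Np) atBot
            (𝓝 ((s, 1 - s^2, 0, 0, 0) : ℝ × ℝ × ℝ × ℝ × ℝ)) :=
  stmt19_general γ κ sb ε hsb hε
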